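/- arXiv:0910.5002 — 2 statements merged into one kernel-verified Lean document; each statement's English description precedes it below -/
import Mathlib

section
/- For every integer L ≥ 1 and every (a,b) ∈ ℝ², equality I(a,b;L) = √(a² + b²) holds if and only if there exists k with 0 ≤ k ≤ L−1 such that a·cos θ_k + b·sin θ_k = 0 or b·cos θ_k − a·sin θ_k = 0. -/
/-!
Write `(a, b) = r (cos φ, sin φ)` and `h = π/(2L)`. Then the numerator of `I(a,b;L)` is
`r F(φ)` with `F(φ) = ∑_{k<L} (|cos (k h - φ)| + |sin (k h - φ)|)`. Since `|cos| + |sin|` has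
period `π/2 = L h`, `F` has period `h`; for `t ∈ [0, h]` all signs are explicit and
telescoping gives `sin (h/2) F(t) = cos (t - h/2)`, while the denominator `D` satisfies
`sin (h/2) D = cos (h/2)`. Hence `F(φ) = D` iff `φ ∈ hℤ`, which is exactly the condition that
some `k h - φ` is a multiple of `π/2`.
-/

open Real
open Finset

/-- The Riemannian approximation `I(a,b;L)` of `√(a² + b²)` built from the angles
`θ_k = πk/(2L)`, `k = 0, …, L−1`. -/
noncomputable def Ifun (L : ℕ) (a b : ℝ) : ℝ :=
  (∑ k ∈ Finset.range L,
      (|a * Real.cos (π * (k : ℝ) / (2 * (L : ℝ))) + b * Real.sin (π * (k : ℝ) / (2 * (L : ℝ)))| +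
       |b * Real.cos (π * (k : ℝ) / (2 * (L : ℝ))) - a * Real.sin (π * (k : ℝ) / (2 * (L : ℝ)))|)) /
  (∑ k ∈ Finset.range L,
      (Real.cos (π * (k : ℝ) / (2 * (L : ℝ))) + Real.sin (π * (k : ℝ) / (2 * (L : ℝ)))))

theorem two_mul_sin_half_mul_sum_range_cos (h c : ℝ) (n : ℕ) :
    2 * sin (h / 2) * ∑ k ∈ range n, cos (k * h + c) = sin (n * h + c - h / 2) - sin (c - h / 2) := by
  induction n with
  | zero => simp
  | succ n ih =>
    rw [sum_range_succ, mul_add, ih, two_mul_sin_mul_cos, ← neg_sub (n * h + c), sin_neg]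
    push_cast
    ring_nf

theorem two_mul_sin_half_mul_sum_range_sin (h c : ℝ) (n : ℕ) :
    2 * sin (h / 2) * ∑ k ∈ range n, sin (k * h + c) = cos (c - h / 2) - cos (n * h + c - h / 2) := by
  induction n with
  | zero => simp
  | succ n ih =>
    rw [sum_range_succ, mul_add, ih, two_mul_sin_mul_sin, ← neg_sub (n * h + c), cos_neg]
    push_cast
    ring_nf

theorem cos_eq_zero_or_sin_eq_zero_iff (x : ℝ) :
    cos x = 0 ∨ sin x = 0 ↔ ∃ m : ℤ, x = m * (π / 2) := by
  have h2x : cos x = 0 ∨ sin x = 0 ↔ sin (2 * x) = 0 := by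
    rw [sin_two_mul, mul_eq_zero, mul_eq_zero]
    norm_num [or_comm]
  rw [h2x, sin_eq_zero_iff]
  refine exists_congr fun m => ?_
  constructor <;> intro hm <;> linarith

/-- The numerator of `Ifun` at the unit vector of angle `φ`, for the step `h = π / (2 * L)`. -/
noncomputable def rotatedL1Sum (L : ℕ) (h φ : ℝ) : ℝ :=
  ∑ k ∈ range L, (|cos (k * h - φ)| + |sin (k * h - φ)|)

section
variable {L : ℕ} {h : ℝ}

theorem pos_left_of_mul_eq_pi_div_two (hLh : L * h = π / 2) : 0 < L := by
  rcases L.eq_zero_or_pos with rfl | hL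
  · simp only [Nat.cast_zero, zero_mul] at hLh; linarith [pi_pos]
  · exact hL

theorem pos_right_of_mul_eq_pi_div_two (hLh : L * h = π / 2) : 0 < h :=
  pos_of_mul_pos_right (hLh ▸ by positivity) L.cast_nonneg

theorem le_pi_div_two_of_mul_eq_pi_div_two (hLh : L * h = π / 2) : h ≤ π / 2 := by
  have hL : (1 : ℝ) ≤ L := by exact_mod_cast pos_left_of_mul_eq_pi_div_two hLh
  nlinarith [pos_right_of_mul_eq_pi_div_two hLh]

theorem rotatedL1Sum_periodic (hLh : L * h = π / 2) : Function.Periodic (rotatedL1Sum L h) h := by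
  intro φ
  let u : ℕ → ℝ := fun k => |cos (k * h - (φ + h))| + |sin (k * h - (φ + h))|
  -- `|cos| + |sin|` has period `π / 2 = L * h`, so the term `k = L` wraps around to `k = 0`
  have hwrap : u L = u 0 := by
    have : (L : ℝ) * h - (φ + h) = (0 : ℕ) * h - (φ + h) + π / 2 := by push_cast; linarith
    simp only [u]
    rw [this, cos_add_pi_div_two, sin_add_pi_div_two, abs_neg, add_comm]
  have hshift : ∀ k : ℕ, u (k + 1) = |cos (k * h - φ)| + |sin (k * h - φ)| := fun k => by
    simp only [u]; push_cast; ring_nf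
  have h1 := sum_range_succ u L
  rw [sum_range_succ', hwrap] at h1
  simp only [rotatedL1Sum, ← hshift]
  linarith

theorem sin_half_mul_rotatedL1Sum (hLh : L * h = π / 2) {t : ℝ} (ht0 : 0 ≤ t) (hth : t ≤ h) :
    sin (h / 2) * rotatedL1Sum L h t = cos (t - h / 2) := by
  have hh := pos_right_of_mul_eq_pi_div_two hLh
  have hhπ := le_pi_div_two_of_mul_eq_pi_div_two hLh
  obtain ⟨n, rfl⟩ := Nat.exists_eq_add_one.mpr (pos_left_of_mul_eq_pi_div_two hLh)
  have hnh : (n : ℝ) * h = π / 2 - h := by push_cast at hLh; linarith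
  have hterm : ∀ k ∈ range n, |cos ((k + 1 : ℕ) * h - t)| + |sin ((k + 1 : ℕ) * h - t)|
      = cos (k * h + (h - t)) + sin (k * h + (h - t)) := fun k hk => by
    have hkn : (k : ℝ) + 1 ≤ n := by exact_mod_cast mem_range.mp hk
    have hx : (k + 1 : ℕ) * h - t = k * h + (h - t) := by push_cast; ring
    have hx0 : 0 ≤ k * h + (h - t) := by positivity
    have hx1 : k * h + (h - t) ≤ π / 2 := by nlinarith
    rw [hx, abs_of_nonneg (cos_nonneg_of_mem_Icc ⟨by linarith [pi_pos], hx1⟩),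
      abs_of_nonneg (sin_nonneg_of_nonneg_of_le_pi hx0 (by linarith [pi_pos]))]
  have hfirst : |cos ((0 : ℕ) * h - t)| + |sin ((0 : ℕ) * h - t)| = cos t + sin t := by
    simp only [Nat.cast_zero, zero_mul, zero_sub, cos_neg, sin_neg, abs_neg]
    rw [abs_of_nonneg (cos_nonneg_of_mem_Icc ⟨by linarith [pi_pos], by linarith⟩),
      abs_of_nonneg (sin_nonneg_of_nonneg_of_le_pi ht0 (by linarith [pi_pos]))]
  have hC := two_mul_sin_half_mul_sum_range_cos h (h - t) n
  have hS := two_mul_sin_half_mul_sum_range_sin h (h - t) n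
  have e1 : (n : ℝ) * h + (h - t) - h / 2 = π / 2 - (t + h / 2) := by linarith
  have e2 : h - t - h / 2 = h / 2 - t := by ring
  simp only [e1, e2, sin_pi_div_two_sub, cos_pi_div_two_sub] at hC hS
  -- for `k ≥ 1` the angles `k * h - t` lie in `[0, π/2]`; only the `k = 0` term has `sin < 0`
  rw [rotatedL1Sum, sum_range_succ', sum_congr rfl hterm, hfirst, sum_add_distrib]
  simp only [cos_add, sin_add, cos_sub, sin_sub] at hC hS ⊢
  linear_combination (hC + hS) / 2

theorem sin_half_mul_sum_range_cos_add_sin (hLh : L * h = π / 2) :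
    sin (h / 2) * ∑ k ∈ range L, (cos (k * h) + sin (k * h)) = cos (h / 2) := by
  have hC := two_mul_sin_half_mul_sum_range_cos h 0 L
  have hS := two_mul_sin_half_mul_sum_range_sin h 0 L
  simp only [add_zero, zero_sub, hLh, sin_neg, cos_neg, sin_pi_div_two_sub, cos_pi_div_two_sub]
    at hC hS
  rw [sum_add_distrib]
  linear_combination (hC + hS) / 2

theorem sin_half_mul_rotatedL1Sum_eq_cos_half_iff (hLh : L * h = π / 2) (φ : ℝ) :
    sin (h / 2) * rotatedL1Sum L h φ = cos (h / 2) ↔ ∃ j : ℤ, φ = j * h := by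
  have hh := pos_right_of_mul_eq_pi_div_two hLh
  have hhπ := le_pi_div_two_of_mul_eq_pi_div_two hLh
  obtain ⟨ht0, hth⟩ : toIcoMod hh 0 φ ∈ Set.Ico 0 h := by
    simpa using toIcoMod_mem_Ico hh 0 φ
  rw [← (rotatedL1Sum_periodic hLh).sub_zsmul_eq (toIcoDiv hh 0 φ), self_sub_toIcoDiv_zsmul,
    sin_half_mul_rotatedL1Sum hLh ht0 hth.le]
  set t := toIcoMod hh 0 φ with ht
  have hcos : cos (t - h / 2) = cos (h / 2) ↔ t = 0 := by
    have habs : |t - h / 2| ≤ h / 2 := abs_le.mpr ⟨by linarith, by linarith⟩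
    rw [← cos_abs (t - h / 2), injOn_cos.eq_iff ⟨abs_nonneg _, by linarith⟩ ⟨by linarith, by linarith⟩,
      abs_eq (by linarith)]
    constructor
    · rintro (h' | h') <;> linarith
    · intro h'; right; linarith
  rw [hcos, ht, toIcoMod_eq_iff]
  simp [hh, zsmul_eq_mul]

theorem exists_cos_eq_zero_or_sin_eq_zero_iff (hLh : L * h = π / 2) (φ : ℝ) :
    (∃ k < L, cos (k * h - φ) = 0 ∨ sin (k * h - φ) = 0) ↔ ∃ j : ℤ, φ = j * h := by
  simp_rw [cos_eq_zero_or_sin_eq_zero_iff, ← hLh]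
  constructor
  · rintro ⟨k, -, m, hm⟩
    exact ⟨k - m * L, by push_cast; linear_combination -hm⟩
  · rintro ⟨j, rfl⟩
    have hL : (0 : ℤ) < L := by exact_mod_cast pos_left_of_mul_eq_pi_div_two hLh
    have hmod : 0 ≤ j % L := Int.emod_nonneg j hL.ne'
    refine ⟨(j % L).toNat, by have := Int.emod_lt_of_pos j hL; omega, -(j / L), ?_⟩
    have hk : (((j % L).toNat : ℕ) : ℝ) = ((j % L : ℤ) : ℝ) := by
      rw [← Int.cast_natCast, Int.toNat_of_nonneg hmod]
    rw [hk, Int.emod_def]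
    push_cast
    ring

end

theorem exists_eq_sqrt_mul_cos_and_sin (a b : ℝ) :
    ∃ φ, a = √(a ^ 2 + b ^ 2) * cos φ ∧ b = √(a ^ 2 + b ^ 2) * sin φ := by
  let z : ℂ := ⟨a, b⟩
  refine ⟨z.arg, ?_, ?_⟩
  · simpa [Complex.norm_eq_sqrt_sq_add_sq, z] using (Complex.norm_mul_cos_arg z).symm
  · simpa [Complex.norm_eq_sqrt_sq_add_sq, z] using (Complex.norm_mul_sin_arg z).symm

theorem mul_cos_mul_cos_add_mul_sin_mul_sin (r φ θ : ℝ) :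
    r * cos φ * cos θ + r * sin φ * sin θ = r * cos (θ - φ) := by
  rw [cos_sub]; ring

theorem mul_sin_mul_cos_sub_mul_cos_mul_sin (r φ θ : ℝ) :
    r * sin φ * cos θ - r * cos φ * sin θ = -(r * sin (θ - φ)) := by
  rw [sin_sub]; ring

theorem Ifun_mul_cos_mul_sin (L : ℕ) {r : ℝ} (hr : 0 ≤ r) (φ : ℝ) :
    Ifun L (r * cos φ) (r * sin φ) = r * rotatedL1Sum L (π / (2 * L)) φ /
      ∑ k ∈ range L, (cos (k * (π / (2 * L))) + sin (k * (π / (2 * L)))) := by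
  have hθ : ∀ k : ℕ, π * k / (2 * L) = k * (π / (2 * L)) := fun k => by ring
  simp only [Ifun, rotatedL1Sum, hθ, mul_sum, mul_cos_mul_cos_add_mul_sin_mul_sin,
    mul_sin_mul_cos_sub_mul_cos_mul_sin, abs_neg, abs_mul, abs_of_nonneg hr, mul_add]

theorem Ifun_mul_cos_mul_sin_eq_iff {L : ℕ} (hL : 1 ≤ L) {r : ℝ} (hr : 0 ≤ r) (φ : ℝ) :
    Ifun L (r * cos φ) (r * sin φ) = r ↔ ∃ k < L,
      r * cos φ * cos (π * k / (2 * L)) + r * sin φ * sin (π * k / (2 * L)) = 0 ∨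
      r * sin φ * cos (π * k / (2 * L)) - r * cos φ * sin (π * k / (2 * L)) = 0 := by
  have hθ : ∀ k : ℕ, π * k / (2 * L) = k * (π / (2 * L)) := fun k => by ring
  simp only [Ifun_mul_cos_mul_sin L hr, hθ, mul_cos_mul_cos_add_mul_sin_mul_sin,
    mul_sin_mul_cos_sub_mul_cos_mul_sin, neg_eq_zero]
  set h := π / (2 * L) with hh
  have hLh : L * h = π / 2 := by rw [hh]; field_simp
  have hh0 := pos_right_of_mul_eq_pi_div_two hLh
  have hhπ := le_pi_div_two_of_mul_eq_pi_div_two hLh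
  have hs : 0 < sin (h / 2) := sin_pos_of_pos_of_lt_pi (by positivity) (by linarith [pi_pos])
  have hc : 0 < cos (h / 2) := cos_pos_of_mem_Ioo ⟨by linarith [pi_pos], by linarith⟩
  have hD := sin_half_mul_sum_range_cos_add_sin hLh
  have hD0 : ∑ k ∈ range L, (cos (k * h) + sin (k * h)) ≠ 0 :=
    right_ne_zero_of_mul (hD ▸ hc.ne')
  rcases hr.eq_or_lt with rfl | hr0
  · simpa using ⟨0, hL⟩
  · rw [div_eq_iff hD0, mul_right_inj' hr0.ne', ← mul_right_inj' hs.ne', hD,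
      sin_half_mul_rotatedL1Sum_eq_cos_half_iff hLh, ← exists_cos_eq_zero_or_sin_eq_zero_iff hLh]
    simp [hr0.ne']

theorem stmt2 (L : ℕ) (hL : 1 ≤ L) (a b : ℝ) :
    Ifun L a b = Real.sqrt (a ^ 2 + b ^ 2) ↔
      ∃ k < L,
        a * Real.cos (π * (k : ℝ) / (2 * (L : ℝ))) + b * Real.sin (π * (k : ℝ) / (2 * (L : ℝ))) = 0 ∨
        b * Real.cos (π * (k : ℝ) / (2 * (L : ℝ))) - a * Real.sin (π * (k : ℝ) / (2 * (L : ℝ))) = 0 := by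
  obtain ⟨φ, ha, hb⟩ := exists_eq_sqrt_mul_cos_and_sin a b
  set r := √(a ^ 2 + b ^ 2)
  rw [ha, hb]
  exact Ifun_mul_cos_mul_sin_eq_iff hL (sqrt_nonneg _) φ
end

section
/- Let h : ZMod N × ZMod M → ℝ be a mean-preserving kernel and λ > 0. Then the map z ↦ ‖h ⋆ z‖₂ + λ·TV_a(z) is a norm on the space of images: it is nonnegative, vanishes exactly at z = 0, is absolutely homogeneous (the value at c·z equals |c| times the value at z for every c ∈ ℝ), and satisfies the triangle inequality. -/
/-- Periodic discrete partial difference in the first (column) direction. -/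
def gradX {N M : ℕ} (f : ZMod N × ZMod M → ℝ) : ZMod N × ZMod M → ℝ :=
  fun p => f p - f (p.1 - 1, p.2)

/-- Periodic discrete partial difference in the second (row) direction. -/
def gradY {N M : ℕ} (f : ZMod N × ZMod M → ℝ) : ZMod N × ZMod M → ℝ :=
  fun p => f p - f (p.1, p.2 - 1)

/-- Anisotropic total variation. -/
noncomputable def TVa {N M : ℕ} [NeZero N] [NeZero M] (f : ZMod N × ZMod M → ℝ) : ℝ :=
  ∑ p : ZMod N × ZMod M, (|gradX f p| + |gradY f p|)

/-- Circular (periodic) convolution of a kernel `h` with an image `f`. -/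
noncomputable def conv {N M : ℕ} [NeZero N] [NeZero M]
    (h f : ZMod N × ZMod M → ℝ) : ZMod N × ZMod M → ℝ :=
  fun p => ∑ q : ZMod N × ZMod M, h q * f (p - q)

/-- The `ℓ₂`-norm of an image. -/
noncomputable def l2norm {N M : ℕ} [NeZero N] [NeZero M]
    (u : ZMod N × ZMod M → ℝ) : ℝ :=
  Real.sqrt (∑ p : ZMod N × ZMod M, (u p) ^ 2)

/-!
The first three properties hold because both summands are seminorms: `l2norm` is the Euclidean
norm, the blurring `conv h` is linear, and `TVa` is a sum of absolute values of linear maps.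
For definiteness, `TVa z = 0` forces `z` to be constant, since the shifts by `(1, 0)` and
`(0, 1)` generate the torus; a mean-preserving kernel fixes constant images, so the `ℓ₂` term
then vanishes only for `z = 0`.
-/

theorem ZMod.apply_eq_apply_zero_of_apply_sub_one {α : Type*} {N : ℕ} {f : ZMod N → α}
    (hf : ∀ x, f (x - 1) = f x) (x : ZMod N) : f x = f 0 := by
  have hper : Function.Periodic f 1 := fun y => by simpa using (hf (y + 1)).symm
  obtain ⟨n, rfl⟩ := ZMod.intCast_surjective x
  simpa using hper.int_mul_eq n

section Images

variable {N M : ℕ}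

theorem gradX_add (f g : ZMod N × ZMod M → ℝ) : gradX (f + g) = gradX f + gradX g := by
  funext p
  simp only [gradX, Pi.add_apply]
  ring

theorem gradY_add (f g : ZMod N × ZMod M → ℝ) : gradY (f + g) = gradY f + gradY g := by
  funext p
  simp only [gradY, Pi.add_apply]
  ring

theorem gradX_smul (c : ℝ) (f : ZMod N × ZMod M → ℝ) :
    gradX (fun p => c * f p) = fun p => c * gradX f p :=
  funext fun _ => (mul_sub _ _ _).symm

theorem gradY_smul (c : ℝ) (f : ZMod N × ZMod M → ℝ) :
    gradY (fun p => c * f p) = fun p => c * gradY f p :=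
  funext fun _ => (mul_sub _ _ _).symm

variable [NeZero N] [NeZero M]

theorem l2norm_eq_norm_toLp (u : ZMod N × ZMod M → ℝ) :
    l2norm u = ‖WithLp.toLp 2 u‖ := by
  simp [EuclideanSpace.norm_eq, l2norm]

theorem l2norm_nonneg (u : ZMod N × ZMod M → ℝ) : 0 ≤ l2norm u :=
  Real.sqrt_nonneg _

theorem l2norm_eq_zero_iff {u : ZMod N × ZMod M → ℝ} : l2norm u = 0 ↔ u = 0 := by
  rw [l2norm_eq_norm_toLp, norm_eq_zero, WithLp.toLp_eq_zero]

theorem l2norm_add_le (u v : ZMod N × ZMod M → ℝ) :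
    l2norm (u + v) ≤ l2norm u + l2norm v := by
  simpa only [l2norm_eq_norm_toLp, WithLp.toLp_add] using norm_add_le _ _

theorem l2norm_smul (c : ℝ) (u : ZMod N × ZMod M → ℝ) :
    l2norm (fun p => c * u p) = |c| * l2norm u := by
  have hsmul : (fun p => c * u p) = c • u := rfl
  rw [hsmul, l2norm_eq_norm_toLp, l2norm_eq_norm_toLp, WithLp.toLp_smul, norm_smul,
    Real.norm_eq_abs]

theorem conv_add (h z w : ZMod N × ZMod M → ℝ) :
    conv h (z + w) = conv h z + conv h w := by
  funext p
  simp [conv, mul_add, Finset.sum_add_distrib]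

theorem conv_smul (h : ZMod N × ZMod M → ℝ) (c : ℝ) (z : ZMod N × ZMod M → ℝ) :
    conv h (fun p => c * z p) = fun p => c * conv h z p := by
  funext p
  simp only [conv, Finset.mul_sum]
  exact Finset.sum_congr rfl fun q _ => by ring

theorem conv_const {h : ZMod N × ZMod M → ℝ} (hmean : ∑ p : ZMod N × ZMod M, h p = 1)
    (a : ℝ) : conv h (fun _ => a) = fun _ => a := by
  funext p
  rw [conv, ← Finset.sum_mul, hmean, one_mul]

theorem TVa_nonneg (f : ZMod N × ZMod M → ℝ) : 0 ≤ TVa f :=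
  Finset.sum_nonneg fun _ _ => by positivity

theorem TVa_add_le (z w : ZMod N × ZMod M → ℝ) : TVa (z + w) ≤ TVa z + TVa w := by
  rw [TVa, TVa, TVa, ← Finset.sum_add_distrib]
  refine Finset.sum_le_sum fun p _ => ?_
  rw [gradX_add, gradY_add, Pi.add_apply, Pi.add_apply]
  linarith [abs_add_le (gradX z p) (gradX w p), abs_add_le (gradY z p) (gradY w p)]

theorem TVa_smul (c : ℝ) (z : ZMod N × ZMod M → ℝ) :
    TVa (fun p => c * z p) = |c| * TVa z := by
  simp only [TVa, gradX_smul, gradY_smul, abs_mul, Finset.mul_sum, mul_add]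

theorem eq_const_of_TVa_eq_zero {z : ZMod N × ZMod M → ℝ} (hz : TVa z = 0) :
    z = fun _ => z 0 := by
  have hterm := (Finset.sum_eq_zero_iff_of_nonneg fun p _ => by positivity).mp hz
  have hx (p : ZMod N × ZMod M) : z (p.1 - 1, p.2) = z p := by
    have hp := hterm p (Finset.mem_univ p)
    have hgrad : gradX z p = 0 := by
      rw [← abs_eq_zero]; linarith [abs_nonneg (gradX z p), abs_nonneg (gradY z p)]
    exact (sub_eq_zero.mp hgrad).symm
  have hy (p : ZMod N × ZMod M) : z (p.1, p.2 - 1) = z p := by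
    have hp := hterm p (Finset.mem_univ p)
    have hgrad : gradY z p = 0 := by
      rw [← abs_eq_zero]; linarith [abs_nonneg (gradX z p), abs_nonneg (gradY z p)]
    exact (sub_eq_zero.mp hgrad).symm
  funext ⟨n, m⟩
  calc z (n, m) = z (0, m) :=
        ZMod.apply_eq_apply_zero_of_apply_sub_one (f := fun n => z (n, m)) (fun n => hx (n, m)) n
    _ = z 0 :=
        ZMod.apply_eq_apply_zero_of_apply_sub_one (f := fun m => z (0, m)) (fun m => hy (0, m)) m

end Images

theorem stmt16 {N M : ℕ} [NeZero N] [NeZero M] (h : ZMod N × ZMod M → ℝ)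
    (hmean : ∑ p : ZMod N × ZMod M, h p = 1) (lam : ℝ) (hlam : 0 < lam) :
    (∀ z : ZMod N × ZMod M → ℝ, 0 ≤ l2norm (conv h z) + lam * TVa z) ∧
    (∀ z : ZMod N × ZMod M → ℝ, l2norm (conv h z) + lam * TVa z = 0 ↔ z = 0) ∧
    (∀ (c : ℝ) (z : ZMod N × ZMod M → ℝ),
      l2norm (conv h fun p => c * z p) + lam * TVa (fun p => c * z p) =
        |c| * (l2norm (conv h z) + lam * TVa z)) ∧
    (∀ z w : ZMod N × ZMod M → ℝ,
      l2norm (conv h (z + w)) + lam * TVa (z + w) ≤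
        (l2norm (conv h z) + lam * TVa z) + (l2norm (conv h w) + lam * TVa w)) := by
  have hnonneg (z : ZMod N × ZMod M → ℝ) : 0 ≤ l2norm (conv h z) + lam * TVa z :=
    add_nonneg (l2norm_nonneg _) (mul_nonneg hlam.le (TVa_nonneg _))
  refine ⟨hnonneg, fun z => ⟨fun hz => ?_, ?_⟩, fun c z => ?_, fun z w => ?_⟩
  · have hl2 : l2norm (conv h z) = 0 := by
      nlinarith [l2norm_nonneg (conv h z), TVa_nonneg z]
    have htv : TVa z = 0 := by
      nlinarith [l2norm_nonneg (conv h z), TVa_nonneg z]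
    rw [eq_const_of_TVa_eq_zero htv, conv_const hmean, l2norm_eq_zero_iff] at hl2
    rw [eq_const_of_TVa_eq_zero htv, congrFun hl2 0]
    rfl
  · rintro rfl
    have hconv : conv h 0 = 0 := conv_const hmean 0
    simp [hconv, l2norm, TVa, gradX, gradY]
  · rw [conv_smul, l2norm_smul, TVa_smul]
    ring
  · rw [conv_add]
    nlinarith [l2norm_add_le (conv h z) (conv h w), TVa_add_le z w]
end
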